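/- arXiv:2009.06858 — 2 statements merged into one kernel-verified Lean document; each statement's English description precedes it below -/
import Mathlib

section
/- Let δ_t^V be the TD errors with respect to a value function V, and let V^{TD}(s) := V(s) + α Σ_{k=0}^∞ (γλ)^k δ_{t+k} be the TD(λ)-updated value function along a fixed trajectory. Then the advantage computed under V^{TD}, namely A^{TD}(s_t,a_t) = r_{t+1} + γ V^{TD}(s_{t+1}) − V^{TD}(s_t), equals (1 − α) δ_t + α (1/λ − 1) Σ_{k=0}^∞ (γλ)^{k+1} δ_{t+k+1}. -/
/-- The TD advantage estimator identity: the advantage computed under the TD(λ)-updated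
value function `V^TD` equals `(1-α)δ_t + α(1/λ - 1) Σ_k (γλ)^{k+1} δ_{t+k+1}`. -/
theorem tdae_identity {S : Type*} (γ lam α : ℝ) (hγ : γ ∈ Set.Ioo (0:ℝ) 1)
    (hlam : lam ∈ Set.Ioo (0:ℝ) 1)
    (s : ℕ → S) (r : ℕ → ℝ) (V : S → ℝ)
    (δ : ℕ → ℝ) (hδ : ∀ j, δ j = r (j+1) + γ * V (s (j+1)) - V (s j))
    (hsum : ∀ j : ℕ, Summable fun k : ℕ => (γ * lam) ^ k * |δ (j + k)|)
    (VTD : ℕ → ℝ) (hVTD : ∀ j, VTD j = V (s j) + α * ∑' k : ℕ, (γ * lam) ^ k * δ (j + k)) :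
    r 1 + γ * VTD 1 - VTD 0 =
      (1 - α) * δ 0 + α * (1 / lam - 1) * ∑' k : ℕ, (γ * lam) ^ (k + 1) * δ (k + 1) := by
  have hq : 0 < γ * lam := mul_pos hγ.1 hlam.1
  have hsum' : ∀ j : ℕ, Summable fun k : ℕ => (γ * lam) ^ k * δ (j + k) := by
    intro j
    refine Summable.of_abs ?_
    have : (fun k : ℕ => |(γ * lam) ^ k * δ (j + k)|)
        = fun k : ℕ => (γ * lam) ^ k * |δ (j + k)| := by
      funext k
      rw [abs_mul, abs_of_nonneg (pow_nonneg hq.le k)]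
    rw [this]; exact hsum j
  set T1 : ℝ := ∑' k : ℕ, (γ * lam) ^ k * δ (1 + k) with hT1
  have h0 : (∑' k : ℕ, (γ * lam) ^ k * δ (0 + k)) = δ 0 + (γ * lam) * T1 := by
    rw [Summable.tsum_eq_zero_add (hsum' 0)]
    simp only [pow_zero, one_mul, Nat.zero_add]
    congr 1
    rw [← tsum_mul_left]
    exact tsum_congr fun k => by rw [pow_succ]; ring_nf
  have h2 : (∑' k : ℕ, (γ * lam) ^ (k + 1) * δ (k + 1)) = (γ * lam) * T1 := by
    rw [← tsum_mul_left]
    exact tsum_congr fun k => by rw [pow_succ, Nat.add_comm k 1]; ring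
  have hlne : lam ≠ 0 := ne_of_gt hlam.1
  rw [hVTD 1, hVTD 0, h0, h2, ← hT1]
  rw [hδ 0]
  field_simp
  ring
end

section
/- Policy improvement bound: under the coupling assumptions, with J(π̂) = J(π) + Σ_t γ^t E_{s_t∼π̂} T̄(s_t) and L_π(π̂) = J(π) + Σ_t γ^t E_{s_t∼π} T̄(s_t), the bound |E_{s_t∼π̂}T̄(s_t) − E_{s_t∼π}T̄(s_t)| ≤ 2(1−(1−κ)^t)κξ implies |J(π̂) − L_π(π̂)| ≤ 2ξγκ²/((1−γ)(1−γ(1−κ))) ≤ 2ξγκ²/(1−γ)². -/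
/-- Policy improvement bound: if `J(π̂) = J(π) + Σ_t γ^t a_t` and
`L_π(π̂) = J(π) + Σ_t γ^t b_t` with `|a_t - b_t| ≤ 2(1-(1-κ)^t)κξ`, then
`|J(π̂) - L_π(π̂)| ≤ 2ξγκ²/((1-γ)(1-γ(1-κ))) ≤ 2ξγκ²/(1-γ)²`. -/
theorem policy_improvement_bound (γ κ ξ : ℝ) (hγ : γ ∈ Set.Ioo (0:ℝ) 1)
    (hκ : κ ∈ Set.Ioc (0:ℝ) 1) (hξ : 0 ≤ ξ)
    (Jπ Jh L : ℝ) (a b : ℕ → ℝ)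
    (hsa : Summable fun t => γ ^ t * a t) (hsb : Summable fun t => γ ^ t * b t)
    (hJh : Jh = Jπ + ∑' t : ℕ, γ ^ t * a t)
    (hL : L = Jπ + ∑' t : ℕ, γ ^ t * b t)
    (hd : ∀ t : ℕ, |a t - b t| ≤ 2 * (1 - (1 - κ) ^ t) * (κ * ξ)) :
    |Jh - L| ≤ 2 * ξ * γ * κ ^ 2 / ((1 - γ) * (1 - γ * (1 - κ))) ∧
      2 * ξ * γ * κ ^ 2 / ((1 - γ) * (1 - γ * (1 - κ))) ≤
        2 * ξ * γ * κ ^ 2 / (1 - γ) ^ 2 := by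
  obtain ⟨hγ0, hγ1⟩ := hγ
  obtain ⟨hκ0, hκ1⟩ := hκ
  have hγκ0 : 0 ≤ γ * (1 - κ) := by nlinarith
  have hγκ1 : γ * (1 - κ) < 1 := by nlinarith
  have hγκabs : |γ * (1 - κ)| < 1 := by rw [abs_of_nonneg hγκ0]; exact hγκ1
  have hγabs : |γ| < 1 := by rw [abs_of_nonneg hγ0.le]; exact hγ1
  have hsg : Summable fun t : ℕ => γ ^ t := summable_geometric_of_lt_one hγ0.le hγ1
  have hsgk : Summable fun t : ℕ => (γ * (1 - κ)) ^ t :=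
    summable_geometric_of_lt_one hγκ0 hγκ1
  -- the bounding sequence
  have hsum_bound : Summable fun t : ℕ => γ ^ t * (2 * (1 - (1 - κ) ^ t) * (κ * ξ)) := by
    have : (fun t : ℕ => γ ^ t * (2 * (1 - (1 - κ) ^ t) * (κ * ξ)))
        = fun t : ℕ => (2 * (κ * ξ)) * γ ^ t - (2 * (κ * ξ)) * (γ * (1 - κ)) ^ t := by
      funext t; rw [mul_pow]; ring
    rw [this]
    exact ((hsg.mul_left _).sub (hsgk.mul_left _))
  have hsd : Summable fun t : ℕ => γ ^ t * (a t - b t) := by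
    have : (fun t : ℕ => γ ^ t * (a t - b t))
        = fun t : ℕ => γ ^ t * a t - γ ^ t * b t := by funext t; ring
    rw [this]; exact hsa.sub hsb
  have hdiff : Jh - L = ∑' t : ℕ, γ ^ t * (a t - b t) := by
    rw [hJh, hL]
    have := Summable.tsum_sub hsa hsb
    rw [show (fun t : ℕ => γ ^ t * a t - γ ^ t * b t) = fun t => γ ^ t * (a t - b t) by
      funext t; ring] at this
    rw [this]; ring
  have habs : |Jh - L| ≤ ∑' t : ℕ, γ ^ t * (2 * (1 - (1 - κ) ^ t) * (κ * ξ)) := by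
    rw [hdiff]
    calc |∑' t : ℕ, γ ^ t * (a t - b t)| ≤ ∑' t : ℕ, |γ ^ t * (a t - b t)| := by
          have h := norm_tsum_le_tsum_norm (f := fun t => γ ^ t * (a t - b t))
            (by simp only [Real.norm_eq_abs]; exact hsd.abs)
          simp only [Real.norm_eq_abs] at h; exact h
      _ ≤ ∑' t : ℕ, γ ^ t * (2 * (1 - (1 - κ) ^ t) * (κ * ξ)) := by
          apply Summable.tsum_le_tsum _ hsd.abs hsum_bound
          intro t
          rw [abs_mul, abs_of_nonneg (pow_nonneg hγ0.le t)]
          exact mul_le_mul_of_nonneg_left (hd t) (pow_nonneg hγ0.le t)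
  have hval : ∑' t : ℕ, γ ^ t * (2 * (1 - (1 - κ) ^ t) * (κ * ξ))
      = 2 * ξ * γ * κ ^ 2 / ((1 - γ) * (1 - γ * (1 - κ))) := by
    have heq : (fun t : ℕ => γ ^ t * (2 * (1 - (1 - κ) ^ t) * (κ * ξ)))
        = fun t : ℕ => (2 * (κ * ξ)) * γ ^ t - (2 * (κ * ξ)) * (γ * (1 - κ)) ^ t := by
      funext t; rw [mul_pow]; ring
    rw [heq, Summable.tsum_sub (hsg.mul_left _) (hsgk.mul_left _), tsum_mul_left, tsum_mul_left,
      tsum_geometric_of_lt_one hγ0.le hγ1, tsum_geometric_of_lt_one hγκ0 hγκ1]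
    have h1 : (1 : ℝ) - γ ≠ 0 := by linarith
    have h2 : (1 : ℝ) - γ * (1 - κ) ≠ 0 := by linarith
    field_simp
    ring
  constructor
  · rw [← hval]; exact habs
  · have hnum : 0 ≤ 2 * ξ * γ * κ ^ 2 := by positivity
    have h1 : (0:ℝ) < 1 - γ := by linarith
    gcongr
    nlinarith [mul_pos h1 (mul_pos hγ0 hκ0)]
end
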